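/- arXiv:1005.3732 — 3 statements merged into one kernel-verified Lean document; each statement's English description precedes it below -/
import Mathlib

section
/- Let H be an associative ℚ-algebra with elements 1_{(1,n)} for n ∈ ℤ satisfying, for all n, l ∈ ℤ: (n−l+2)(1_{(1,n−1)}1_{(1,l+1)} − 1_{(1,l−1)}1_{(1,n+1)}) = (n−l)(1_{(1,n)}1_{(1,l)} − 1_{(1,l−2)}1_{(1,n+2)}). Then every product 1_{(1,n₁)}⋯1_{(1,n_r)} is a ℚ-linear combination of ordered products 1_{(1,l₁)}⋯1_{(1,l_r)} with l₁ ≤ l₂ ≤ ⋯ ≤ l_r. -/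
/-!
Give a word `n₀ n₁ ⋯ n_{r-1}` in the generators the energy `Σᵢ (nᵢ - 3i)²`. A word that is not
sorted has an adjacent descent `m > l`, and the relation rewrites `a m * a l` as
`a (l - 2) * a (m + 2)` plus a multiple of `a (m - 1) * a (l + 1) - a (l - 1) * a (m + 1)`.
All three replacement words have strictly smaller energy, so strong induction on the energy
straightens every word. The shift `3i` rather than `2i` matters: in the coordinates `nᵢ - 2i`
the first replacement is a mere transposition and would not lower the energy.
-/

namespace HiggsStraightening

variable {K H : Type*} [Field K] [Ring H] [Algebra K H]

variable (K) in
def HiggsRelation (a : ℤ → H) : Prop :=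
  ∀ n l : ℤ, ((n : K) - l + 2) • (a (n - 1) * a (l + 1) - a (l - 1) * a (n + 1)) =
    ((n : K) - l) • (a n * a l - a (l - 2) * a (n + 2))

theorem HiggsRelation.mul_eq_of_lt [CharZero K] {a : ℤ → H} (hrel : HiggsRelation K a)
    {m l : ℤ} (hlm : l < m) :
    a m * a l = a (l - 2) * a (m + 2) +
      (((m : K) - l + 2) / ((m : K) - l)) • (a (m - 1) * a (l + 1) - a (l - 1) * a (m + 1)) := by
  have hne : (m : K) - l ≠ 0 := sub_ne_zero.mpr (by exact_mod_cast hlm.ne')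
  rw [div_eq_inv_mul, mul_smul, hrel m l, inv_smul_smul₀ hne, add_sub_cancel]

variable (K) in
def straightSpan (a : ℤ → H) (r : ℕ) : Submodule K H :=
  Submodule.span K {x | ∃ v : List ℤ, v.SortedLE ∧ v.length = r ∧ x = (v.map a).prod}

def energy (k : ℤ) : List ℤ → ℕ
  | [] => 0
  | x :: s => (x - 3 * k).natAbs ^ 2 + energy (k + 1) s

theorem energy_append (k : ℤ) (p q : List ℤ) :
    energy k (p ++ q) = energy k p + energy (k + p.length) q := by
  induction p generalizing k with
  | nil => simp [energy]
  | cons x p ih =>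
    simp only [List.cons_append, energy, ih, List.length_cons]
    rw [add_assoc, Nat.cast_succ, add_assoc, add_comm 1]

theorem energy_lt_of_pair_lt {x y x' y' : ℤ}
    (h : ∀ j : ℤ, (x' - 3 * j) ^ 2 + (y' - 3 * j - 3) ^ 2 < (x - 3 * j) ^ 2 + (y - 3 * j - 3) ^ 2)
    (p s : List ℤ) : energy 0 (p ++ x' :: y' :: s) < energy 0 (p ++ x :: y :: s) := by
  simp only [energy_append, energy]
  have := h p.length
  zify
  push_cast [sq_abs]
  linarith

theorem exists_descent_of_not_sortedLE {u : List ℤ} (hu : ¬ u.SortedLE) :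
    ∃ p m l s, u = p ++ m :: l :: s ∧ l < m := by
  rw [List.sortedLE_iff_isChain] at hu
  induction u with
  | nil => simp at hu
  | cons x t ih =>
    rcases t with _ | ⟨y, t⟩
    · simp at hu
    by_cases hyx : y < x
    · exact ⟨[], x, y, t, rfl, hyx⟩
    obtain ⟨p, m, l, s, hyt, hlm⟩ := ih (by simpa [le_of_not_gt hyx] using hu)
    exact ⟨x :: p, m, l, s, by rw [hyt, List.cons_append], hlm⟩

theorem prod_map_append_cons_cons (a : ℤ → H) (p s : List ℤ) (x y : ℤ) :
    ((p ++ x :: y :: s).map a).prod = (p.map a).prod * (a x * a y) * (s.map a).prod := by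
  simp [mul_assoc]

theorem prod_map_mem_straightSpan [CharZero K] {a : ℤ → H} (hrel : HiggsRelation K a)
    (u : List ℤ) : (u.map a).prod ∈ straightSpan K a u.length := by
  induction hE : energy 0 u using Nat.strong_induction_on generalizing u with
  | _ E ih =>
  subst hE
  by_cases hu : u.SortedLE
  · exact Submodule.subset_span ⟨u, hu, rfl, rfl⟩
  obtain ⟨p, m, l, s, rfl, hlm⟩ := exists_descent_of_not_sortedLE hu
  have hword : ∀ x y : ℤ, (∀ j : ℤ, (x - 3 * j) ^ 2 + (y - 3 * j - 3) ^ 2 <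
      (m - 3 * j) ^ 2 + (l - 3 * j - 3) ^ 2) →
      (p.map a).prod * (a x * a y) * (s.map a).prod ∈
        straightSpan K a (p ++ m :: l :: s).length := fun x y h => by
    have := ih _ (energy_lt_of_pair_lt h p s) _ rfl
    rw [prod_map_append_cons_cons] at this
    simpa only [List.length_append, List.length_cons] using this
  rw [prod_map_append_cons_cons, hrel.mul_eq_of_lt hlm, mul_add, add_mul, mul_smul_comm,
    smul_mul_assoc, mul_sub, sub_mul]
  refine add_mem (hword _ _ ?_) (Submodule.smul_mem _ _ (sub_mem (hword _ _ ?_) (hword _ _ ?_)))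
  all_goals intro j; nlinarith

end HiggsStraightening

open HiggsStraightening in
/-- Let `H` be an associative `ℚ`-algebra with elements
`a n = 1_{(1,n)}` for `n ∈ ℤ` satisfying, for all `n, l ∈ ℤ`,
`(n−l+2)(a(n−1)a(l+1) − a(l−1)a(n+1)) = (n−l)(a(n)a(l) − a(l−2)a(n+2))`.
Then every product `a n₁ ⋯ a n_r` is a `ℚ`-linear combination of ordered
products `a l₁ ⋯ a l_r` with `l₁ ≤ l₂ ≤ ⋯ ≤ l_r`. -/
theorem straightening
    (H : Type*) [Ring H] [Algebra ℚ H] (a : ℤ → H)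
    (hrel : ∀ n l : ℤ,
      ((n : ℚ) - l + 2) • (a (n - 1) * a (l + 1) - a (l - 1) * a (n + 1)) =
        ((n : ℚ) - l) • (a n * a l - a (l - 2) * a (n + 2)))
    (r : ℕ) (nn : Fin r → ℤ) :
    (List.ofFn fun i => a (nn i)).prod ∈
      Submodule.span ℚ
        {x : H | ∃ ll : Fin r → ℤ, Monotone ll ∧ x = (List.ofFn fun i => a (ll i)).prod} := by
  have h := prod_map_mem_straightSpan (K := ℚ) hrel (List.ofFn nn)
  rw [List.map_ofFn, List.length_ofFn] at h
  refine Submodule.span_mono ?_ h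
  rintro _ ⟨v, hv, rfl, rfl⟩
  exact ⟨v.get, hv, by simp⟩
end

section
/- Let V be a d-dimensional ℂ-vector space, f : V → V a nilpotent endomorphism of Jordan type μ (a partition of d), and λ a partition of d. If there exists a filtration 0 = V₀ ⊆ V₁ ⊆ ⋯ ⊆ V_{ℓ(λ')} = V with f(V_i) ⊆ V_{i−1} and dim V_i/V_{i−1} = λ'_i for all i (where λ' is the conjugate partition), then μ ⪯ λ in the dominance order. Moreover if μ = λ then such a filtration is unique. -/
/-!
A filtration with `f(Wᵢ₊₁) ⊆ Wᵢ` and `W₀ = 0` satisfies `Wᵢ ⊆ Ker fⁱ`. Comparing dimensions gives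
`λ'₁ + ⋯ + λ'ᵢ ≤ μ'₁ + ⋯ + μ'ᵢ`; when `μ = λ` the dimensions agree, so every such filtration is the
kernel filtration `Wᵢ = Ker fⁱ`.
-/

namespace Submodule

theorem le_ker_pow_of_map_succ_le {R M : Type*} [Ring R] [AddCommGroup M] [Module R M]
    {f : Module.End R M} {U : ℕ → Submodule R M} (h0 : U 0 = ⊥)
    (hU : ∀ i, (U (i + 1)).map f ≤ U i) (i : ℕ) : U i ≤ LinearMap.ker (f ^ i) := by
  induction i with
  | zero => simp [h0]
  | succ i ih =>
    intro x hx
    have hfx : f x ∈ LinearMap.ker (f ^ i) := ih (hU i ⟨x, hx, rfl⟩)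
    rwa [LinearMap.mem_ker, pow_succ, Module.End.mul_apply]

variable {K V : Type*} [DivisionRing K] [AddCommGroup V] [Module K V] [FiniteDimensional K V]
  {f : Module.End K V} {U : ℕ → Submodule K V}

theorem eq_ker_pow_of_map_succ_le (h0 : U 0 = ⊥) (hU : ∀ i, (U (i + 1)).map f ≤ U i) {i : ℕ}
    (hdim : Module.finrank K (LinearMap.ker (f ^ i)) ≤ Module.finrank K (U i)) :
    U i = LinearMap.ker (f ^ i) :=
  eq_of_le_of_finrank_le (le_ker_pow_of_map_succ_le h0 hU i) hdim

end Submodule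

theorem flag_dominance_and_uniqueness_general
    (V : Type) [AddCommGroup V] [Module ℂ V] [FiniteDimensional ℂ V]
    (f : Module.End ℂ V)
    (mu' lam' : ℕ → ℕ)
    (hmu : ∀ i : ℕ,
      Module.finrank ℂ (LinearMap.ker (f ^ i)) = ∑ j ∈ Finset.range i, mu' j)
    (ℓ : ℕ)
    (W : ℕ → Submodule ℂ V)
    (hW0 : W 0 = ⊥)
    (hWf : ∀ i, Submodule.map f (W (i + 1)) ≤ W i)
    (hWdim : ∀ i, Module.finrank ℂ (W (i + 1)) = Module.finrank ℂ (W i) + lam' i) :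
    (∀ i, ∑ j ∈ Finset.range i, lam' j ≤ ∑ j ∈ Finset.range i, mu' j) ∧
      ((∀ j, mu' j = lam' j) →
        ∀ W₂ : ℕ → Submodule ℂ V,
          W₂ 0 = ⊥ → W₂ ℓ = ⊤ → Monotone W₂ →
          (∀ i, Submodule.map f (W₂ (i + 1)) ≤ W₂ i) →
          (∀ i, Module.finrank ℂ (W₂ (i + 1)) = Module.finrank ℂ (W₂ i) + lam' i) →
          ∀ i, W₂ i = W i) := by
  have finrank_eq_sum {U : ℕ → Submodule ℂ V} (h0 : U 0 = ⊥)
      (hdim : ∀ i, Module.finrank ℂ (U (i + 1)) = Module.finrank ℂ (U i) + lam' i) (i : ℕ) :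
      Module.finrank ℂ (U i) = ∑ j ∈ Finset.range i, lam' j :=
    (Finset.sum_range_induction lam' (fun k => Module.finrank ℂ (U k)) (by simp [h0]) i
      fun k _ => hdim k).symm
  refine ⟨fun i => ?_, fun hmu_eq W₂ hW₂0 _ _ hW₂f hW₂dim i => ?_⟩
  · rw [← finrank_eq_sum hW0 hWdim, ← hmu]
    exact Submodule.finrank_mono (Submodule.le_ker_pow_of_map_succ_le hW0 hWf i)
  · have eq_ker {U : ℕ → Submodule ℂ V} (h0 : U 0 = ⊥) (hU : ∀ i, (U (i + 1)).map f ≤ U i)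
        (hdim : ∀ i, Module.finrank ℂ (U (i + 1)) = Module.finrank ℂ (U i) + lam' i) :
        U i = LinearMap.ker (f ^ i) :=
      Submodule.eq_ker_pow_of_map_succ_le h0 hU <| by
        rw [hmu, finrank_eq_sum h0 hdim]
        exact (Finset.sum_congr rfl fun j _ => hmu_eq j).le
    rw [eq_ker hW₂0 hW₂f hW₂dim, eq_ker hW0 hWf hWdim]

/-- Let `V` be a `d`-dimensional `ℂ`-vector space and
`f : V → V` a nilpotent endomorphism of Jordan type `μ ⊢ d` (recorded through
its conjugate partition `mu'` via `dim Ker fⁱ = mu'₁ + ⋯ + mu'ᵢ`), and let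
`λ ⊢ d` be a partition with conjugate `lam'`.  If there is a filtration
`0 = W₀ ⊆ W₁ ⊆ ⋯ ⊆ W_ℓ = V` with `f(Wᵢ₊₁) ⊆ Wᵢ` and
`dim Wᵢ₊₁/Wᵢ = lam'ᵢ`, then `λ' ⪯ μ'` in dominance order (equivalently
`μ ⪯ λ`).  Moreover, if `μ = λ` then such a filtration is unique. -/
theorem flag_dominance_and_uniqueness
    (d : ℕ) (V : Type) [AddCommGroup V] [Module ℂ V] [FiniteDimensional ℂ V]
    (hd : Module.finrank ℂ V = d)
    (f : Module.End ℂ V) (hf : IsNilpotent f)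
    (mu' lam' : ℕ → ℕ) (hmu'A : Antitone mu') (hlam'A : Antitone lam')
    (hmu : ∀ i : ℕ,
      Module.finrank ℂ (LinearMap.ker (f ^ i)) = ∑ j ∈ Finset.range i, mu' j)
    (ℓ : ℕ) (hlamsum : ∑ j ∈ Finset.range ℓ, lam' j = d)
    (W : ℕ → Submodule ℂ V)
    (hW0 : W 0 = ⊥) (hWtop : W ℓ = ⊤) (hWmono : Monotone W)
    (hWf : ∀ i, Submodule.map f (W (i + 1)) ≤ W i)
    (hWdim : ∀ i, Module.finrank ℂ (W (i + 1)) = Module.finrank ℂ (W i) + lam' i) :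
    (∀ i, ∑ j ∈ Finset.range i, lam' j ≤ ∑ j ∈ Finset.range i, mu' j) ∧
      ((∀ j, mu' j = lam' j) →
        ∀ W₂ : ℕ → Submodule ℂ V,
          W₂ 0 = ⊥ → W₂ ℓ = ⊤ → Monotone W₂ →
          (∀ i, Submodule.map f (W₂ (i + 1)) ≤ W₂ i) →
          (∀ i, Module.finrank ℂ (W₂ (i + 1)) = Module.finrank ℂ (W₂ i) + lam' i) →
          ∀ i, W₂ i = W i) :=
  flag_dominance_and_uniqueness_general V f mu' lam' hmu ℓ W hW0 hWf hWdim
end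

section
/- Fix d ∈ ℕ. For partitions λ, μ of d with conjugates λ', μ', suppose a nilpotent endomorphism of type μ on a d-dimensional space admits a flag adapted to λ' (i.e. a filtration with successive quotients of dimensions λ'_1, …, λ'_{ℓ(λ')} killed by f). Then λ' ⪯ μ' in dominance order, equivalently μ ⪯ λ. The functions 1_{λ'} (counting such flags with Euler characteristic) therefore form a unitriangular system with respect to dominance order on the set of functions {1_{F_μ}}, and hence the span of {1_{λ'} : λ ⊢ d} modulo generically-zero functions contains, for each λ, an element generically 1 on F_λ and generically 0 on F_μ for μ ≠ λ. -/
/-!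
A flag `0 = W₀ ≤ W₁ ≤ ⋯` with `f Wᵢ₊₁ ≤ Wᵢ` satisfies `Wᵢ ≤ ker fⁱ`, so comparing dimensions gives
`λ'₀ + ⋯ + λ'ᵢ₋₁ ≤ μ'₀ + ⋯ + μ'ᵢ₋₁`, which is the dominance `λ' ⪯ μ'`.
For the second part, a matrix that is unitriangular for a partial order is unitriangular for a
linear extension of it, so its determinant is `1` and it has an inverse.
-/

theorem Submodule.le_ker_pow_of_map_succ_le_s18 {R M : Type*} [Semiring R] [AddCommMonoid M]
    [Module R M] {f : Module.End R M} {W : ℕ → Submodule R M} (hW₀ : W 0 = ⊥)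
    (hf : ∀ i, (W (i + 1)).map f ≤ W i) (i : ℕ) : W i ≤ LinearMap.ker (f ^ i) := by
  induction i with
  | zero => simp [hW₀]
  | succ n ih =>
    intro x hx
    have hfx : f x ∈ LinearMap.ker (f ^ n) := ih (hf n ⟨x, hx, rfl⟩)
    simpa [pow_succ] using hfx

theorem Submodule.sum_le_finrank_ker_pow_of_flag {K V : Type*} [DivisionRing K] [AddCommGroup V]
    [Module K V] [FiniteDimensional K V] {f : Module.End K V} {W : ℕ → Submodule K V}
    {a : ℕ → ℕ} (hW₀ : W 0 = ⊥) (hf : ∀ i, (W (i + 1)).map f ≤ W i)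
    (hdim : ∀ i, Module.finrank K (W (i + 1)) = Module.finrank K (W i) + a i) (i : ℕ) :
    ∑ j ∈ Finset.range i, a j ≤ Module.finrank K (LinearMap.ker (f ^ i)) :=
  calc ∑ j ∈ Finset.range i, a j = Module.finrank K (W i) :=
        Finset.sum_range_induction _ (fun n ↦ Module.finrank K (W n)) (by simp [hW₀]) _
          fun k _ ↦ hdim k
    _ ≤ _ := Submodule.finrank_mono (le_ker_pow_of_map_succ_le_s18 hW₀ hf i)

theorem Matrix.det_of_isLowerTriangular_of_partialOrder {ι R : Type*} [Fintype ι] [DecidableEq ι]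
    [PartialOrder ι] [CommRing R] (M : Matrix ι ι R) (hM : ∀ i j, M i j ≠ 0 → j ≤ i) :
    M.det = ∏ i, M i i := by
  let e : ι ≃ LinearExtension ι := Equiv.refl ι
  let : Fintype (LinearExtension ι) := Fintype.ofEquiv ι e
  have hlower : (reindex e e M).IsLowerTriangular := fun i j (hij : i < j) ↦ by
    by_contra hne
    have hji : toLinearExtension (e.symm j) ≤ toLinearExtension (e.symm i) :=
      toLinearExtension.monotone (hM (e.symm i) (e.symm j) hne)
    exact not_le_of_gt hij hji
  rw [← det_reindex_self e, det_of_isLowerTriangular _ hlower]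
  exact Fintype.prod_equiv e.symm _ _ fun _ ↦ rfl

theorem Matrix.exists_mul_eq_one_of_unitriangular {ι K : Type*} [Fintype ι] [DecidableEq ι]
    [PartialOrder ι] [Field K] (M : Matrix ι ι K) (hdiag : ∀ i, M i i = 1)
    (hM : ∀ i j, M i j ≠ 0 → j ≤ i) : ∃ N : Matrix ι ι K, N * M = 1 := by
  have hdet : M.det = 1 := by simp [det_of_isLowerTriangular_of_partialOrder M hM, hdiag]
  exact ⟨M⁻¹, nonsing_inv_mul M (by simp [hdet])⟩

/-- Fix `d ∈ ℕ`.  (1) For partitions `λ, μ ⊢ d` with conjugates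
`lam', mu'`, if a nilpotent endomorphism of Jordan type `μ` on a
`d`-dimensional space admits a flag adapted to `λ'` (a filtration with
successive quotients of dimensions `lam'₀, lam'₁, …` killed by `f`), then
`λ' ⪯ μ'` in dominance order, equivalently `μ ⪯ λ`.  (2) Hence the functions
`1_{λ'}` form a unitriangular system with respect to dominance order: given a
family with coordinates `c l m` (the generic value of the `l`-th function on
`F_m`) satisfying `c l l = 1` and `c l m = 0` unless `m ⪯ l`, there are linear
combinations with delta coordinates, i.e. for each `λ` an element generically
`1` on `F_λ` and generically `0` on every `F_μ`, `μ ≠ λ`. -/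
theorem unitriangular_flag_system (d : ℕ) :
    (∀ (V : Type) (_ : AddCommGroup V), ∀ (_ : Module ℂ V) (_ : FiniteDimensional ℂ V),
      Module.finrank ℂ V = d →
      ∀ (f : Module.End ℂ V), IsNilpotent f →
      ∀ (mu' lam' : ℕ → ℕ), Antitone mu' → Antitone lam' →
      (∀ i : ℕ, Module.finrank ℂ (LinearMap.ker (f ^ i)) = ∑ j ∈ Finset.range i, mu' j) →
      ∀ (ℓ : ℕ), (∑ j ∈ Finset.range ℓ, lam' j = d) →
      ∀ (W : ℕ → Submodule ℂ V), W 0 = ⊥ → W ℓ = ⊤ → Monotone W →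
      (∀ i, Submodule.map f (W (i + 1)) ≤ W i) →
      (∀ i, Module.finrank ℂ (W (i + 1)) = Module.finrank ℂ (W i) + lam' i) →
      ∀ i, ∑ j ∈ Finset.range i, lam' j ≤ ∑ j ∈ Finset.range i, mu' j) ∧
    (∀ (ι : Type) (_ : Fintype ι) (_ : PartialOrder ι) (_ : DecidableEq ι)
        (c : ι → ι → ℚ),
      (∀ l, c l l = 1) → (∀ l m, c l m ≠ 0 → m ≤ l) →
      ∃ M : ι → ι → ℚ, ∀ l m, (∑ ν : ι, M l ν * c ν m) = if l = m then 1 else 0) := by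
  constructor
  · intro V _ _ _ _ f _ mu' lam' _ _ hker _ _ W hW₀ _ _ hf hdim i
    exact hker i ▸ Submodule.sum_le_finrank_ker_pow_of_flag hW₀ hf hdim i
  · intro ι _ _ _ c hdiag htri
    obtain ⟨N, hN⟩ := Matrix.exists_mul_eq_one_of_unitriangular (Matrix.of c) hdiag htri
    exact ⟨N, fun l m ↦ by simpa [Matrix.mul_apply, Matrix.one_apply] using congrFun₂ hN l m⟩
end
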